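/- arXiv:2109.01882 — 6 statements merged into one kernel-verified Lean document; each statement's English description precedes it below -/
import Mathlib

section
/- If u = w₁w₂ and v = w₂w₃ are Lyndon words with u >_lex v (which holds automatically when w₂ is nonempty), then the word w₁w₂w₃ is a Lyndon word. -/
/-- The lexicographic order of the paper: `u <_lex v` iff `v` is a proper prefix of `u`,
or `u = r ++ x :: s`, `v = r ++ y :: t` with letters `x < y`. -/
def PLt {X : Type*} [LinearOrder X] (u v : List X) : Prop :=
  (v <+: u ∧ v ≠ u) ∨
    ∃ (r s t : List X) (x y : X), x < y ∧ u = r ++ x :: s ∧ v = r ++ y :: t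

def PLe {X : Type*} [LinearOrder X] (u v : List X) : Prop := PLt u v ∨ u = v

/-- A nonempty word is Lyndon iff `u >_lex w ++ v` for every factorization `u = v ++ w`
with `v, w` nonempty. -/
def IsLyndon {X : Type*} [LinearOrder X] (u : List X) : Prop :=
  u ≠ [] ∧ ∀ v w : List X, u = v ++ w → v ≠ [] → w ≠ [] → PLt (w ++ v) u

section Aux
variable {X : Type*} [LinearOrder X]

/-- strict letter-difference comparison -/
def SLt (u v : List X) : Prop :=
  ∃ (r s t : List X) (x y : X), x < y ∧ u = r ++ x :: s ∧ v = r ++ y :: t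

lemma slt_irrefl (u : List X) : ¬ SLt u u := by
  rintro ⟨r, s, t, x, y, hxy, h1, h2⟩
  rw [h1] at h2
  have h3 : x :: s = y :: t := by simpa using h2
  exact absurd (List.cons.injEq .. ▸ h3).1 hxy.ne

lemma SLt.trans {u v w : List X} (h1 : SLt u v) (h2 : SLt v w) : SLt u w := by
  obtain ⟨r1, s1, t1, x1, y1, hxy1, hu, hv1⟩ := h1
  obtain ⟨r2, s2, t2, x2, y2, hxy2, hv2, hw⟩ := h2
  rw [hv1] at hv2
  rcases List.append_eq_append_iff.mp hv2 with ⟨e, he, heq⟩ | ⟨e, he, heq⟩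
  · cases e with
    | nil =>
      simp at he heq
      exact ⟨r1, s1, t2, x1, y2, hxy1.trans (heq.1 ▸ hxy2), hu, by rw [hw, he]⟩
    | cons c e' =>
      simp at heq
      exact ⟨r1, s1, e' ++ y2 :: t2, x1, y1, hxy1, hu,
        by rw [hw, he, heq.1]; simp⟩
  · cases e with
    | nil =>
      simp at he heq
      exact ⟨r1, s1, t2, x1, y2, hxy1.trans (heq.1.symm ▸ hxy2), hu, by rw [hw, he]⟩
    | cons c e' =>
      simp at heq
      exact ⟨r2, e' ++ x1 :: s1, t2, x2, y2, hxy2,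
        by rw [hu, he, ← heq.1]; simp, hw⟩

lemma SLt.append_append {u v : List X} (h : SLt u v) (a b : List X) :
    SLt (u ++ a) (v ++ b) := by
  obtain ⟨r, s, t, x, y, hxy, h1, h2⟩ := h
  exact ⟨r, s ++ a, t ++ b, x, y, hxy, by rw [h1]; simp, by rw [h2]; simp⟩

lemma slt_of_append_append {a u v : List X} (h : SLt (a ++ u) (a ++ v)) : SLt u v := by
  obtain ⟨r, s, t, x, y, hxy, h1, h2⟩ := h
  rcases List.append_eq_append_iff.mp h1 with ⟨e, he, heq⟩ | ⟨e, he, heq⟩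
  · refine ⟨e, s, t, x, y, hxy, heq, ?_⟩
    rw [he] at h2
    simpa using h2
  · cases e with
    | nil =>
      simp at he heq
      subst he
      refine ⟨[], s, t, x, y, hxy, by simpa using heq.symm, ?_⟩
      simpa using h2
    | cons c e' =>
      simp at heq
      rw [he, ← heq.1] at h2
      rw [List.append_assoc] at h2
      have h3 : x :: (e' ++ v) = y :: t := by simpa using h2
      simp at h3
      exact absurd h3.1 hxy.ne

lemma slt_of_plt {u v : List X} (h : PLt u v) (hl : u.length = v.length) : SLt u v := by
  rcases h with ⟨hpre, hne⟩ | h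
  · exact absurd (hpre.eq_of_length hl.symm) hne
  · exact h

lemma unbordered {w v s : List X} (hw : IsLyndon w) (hpre : s <+: w) (hsuf : w = v ++ s)
    (hv : v ≠ []) (hs : s ≠ []) : False := by
  obtain ⟨t, ht⟩ := hpre
  have hlen : t.length = v.length := by
    have h := congrArg List.length ht
    rw [hsuf] at h; simp at h; omega
  have htne : t ≠ [] := by
    intro h; subst h
    exact hv (List.eq_nil_of_length_eq_zero (by simpa using hlen.symm))
  have r1 : SLt v t := by
    have h0 : SLt (s ++ v) w :=
      slt_of_plt (hw.2 v s hsuf hv hs) (by rw [hsuf]; simp; omega)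
    rw [← ht] at h0
    exact slt_of_append_append h0
  have r2 : SLt (t ++ s) (v ++ s) := by
    have := slt_of_plt (hw.2 s t ht.symm hs htne) (by rw [← ht]; simp; omega)
    rwa [hsuf] at this
  exact slt_irrefl _ (r2.trans (r1.append_append s s))

lemma suffix_slt {w v s : List X} (hw : IsLyndon w) (h : w = v ++ s) (hv : v ≠ []) (hs : s ≠ []) :
    SLt s w := by
  have h0 : SLt (s ++ v) w :=
    slt_of_plt (hw.2 v s h hv hs) (by rw [h]; simp; omega)
  obtain ⟨r, a, b, x, y, hxy, h1, h2⟩ := h0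
  rcases List.append_eq_append_iff.mp h1 with ⟨e, he, _⟩ | ⟨e, he, heq⟩
  · exact (unbordered hw ⟨e ++ y :: b, by rw [h2, he]; simp⟩ h hv hs).elim
  · cases e with
    | nil =>
      simp at he
      exact (unbordered hw ⟨y :: b, by rw [h2, he]⟩ h hv hs).elim
    | cons c e' =>
      simp at heq
      exact ⟨r, e', b, x, y, hxy, by rw [he, heq.1], h2⟩

lemma claimC (w₁ w₂ w₃ : List X) (hu : IsLyndon (w₁ ++ w₂))
    (hv : IsLyndon (w₂ ++ w₃)) (hlt : PLt (w₂ ++ w₃) (w₁ ++ w₂)) (h1 : w₁ ≠ []) :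
    SLt (w₂ ++ w₃) (w₁ ++ w₂ ++ w₃) := by
  rcases hlt with ⟨hpre, hne⟩ | ⟨r, s, t, x, y, hxy, hv', hu'⟩
  · obtain ⟨z, hz⟩ := hpre
    have hzne : z ≠ [] := by
      rintro rfl; simp at hz; exact hne hz
    by_cases h2 : w₂ = []
    · subst h2
      simp only [List.append_nil, List.nil_append] at *
      have hsz : SLt z w₃ := suffix_slt hv hz.symm hu.1 hzne
      obtain ⟨r, s, t, x, y, hxy, hz1, hz2⟩ := hsz
      exact ⟨w₁ ++ r, s, t, x, y, hxy, by rw [← hz, hz1]; simp, by rw [hz2]; simp⟩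
    · have hw2u : w₂ <+: (w₁ ++ w₂) :=
        List.prefix_of_prefix_length_le (List.prefix_append w₂ w₃)
          ⟨z, hz⟩ (by simp)
      exact (unbordered hu hw2u rfl h1 h2).elim
  · exact ⟨r, s, t ++ w₃, x, y, hxy, hv', by rw [hu']; simp⟩

end Aux

/-- If `u = w₁w₂` and `v = w₂w₃` are Lyndon words with `u >_lex v`,
then `w₁w₂w₃` is a Lyndon word. -/
theorem isLyndon_append {X : Type*} [LinearOrder X] (w₁ w₂ w₃ : List X)
    (hu : IsLyndon (w₁ ++ w₂)) (hv : IsLyndon (w₂ ++ w₃))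
    (hlt : PLt (w₂ ++ w₃) (w₁ ++ w₂)) :
    IsLyndon (w₁ ++ w₂ ++ w₃) := by
  refine ⟨?_, ?_⟩
  · intro h
    rw [List.append_eq_nil_iff] at h
    exact hu.1 h.1
  · intro p q hw hp hq
    suffices hq' : SLt q (w₁ ++ w₂ ++ w₃) by
      obtain ⟨r, a, b, x, y, hxy, h1, h2⟩ := hq'
      exact Or.inr ⟨r, a ++ p, b, x, y, hxy, by rw [h1]; simp, h2⟩
    have hcommon : ∀ c : List X, (w₁ ++ w₂) ++ c = p → w₃ = c ++ q →
        SLt q (w₁ ++ w₂ ++ w₃) := by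
      intro c hc1 hc2
      have hvq : w₂ ++ w₃ = (w₂ ++ c) ++ q := by rw [hc2]; simp
      by_cases hd : w₂ ++ c = []
      · rw [List.append_eq_nil_iff] at hd
        obtain ⟨hd1, hd2⟩ := hd
        have h1 : w₁ ≠ [] := by
          intro h; apply hp; rw [← hc1, h, hd1, hd2]; simp
        have h3 := claimC w₁ w₂ w₃ hu hv hlt h1
        rw [hvq, hd1, hd2] at h3
        rw [hd1]
        simpa using h3
      · have hqv : SLt q (w₂ ++ w₃) := suffix_slt hv hvq hd hq
        by_cases h1 : w₁ = []
        · subst h1; simpa using hqv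
        · exact hqv.trans (claimC w₁ w₂ w₃ hu hv hlt h1)
    rcases List.append_eq_append_iff.mp hw with ⟨e, he, heq⟩ | ⟨e, he, heq⟩
    · exact hcommon e he.symm heq
    · cases e with
      | nil =>
        simp at he heq
        exact hcommon [] (by simp [he]) (by simp [heq])
      | cons c e' =>
        have hslt : SLt (c :: e') (w₁ ++ w₂) := suffix_slt hu he hp (by simp)
        have h4 := hslt.append_append w₃ w₃
        rw [heq]
        exact h4
end

section
/- Let u and v be Lyndon words with u >_lex v. Then the Shirshov factorization of uv equals (u, v) if and only if either u is a single letter, or u has length ≥ 2 and its Shirshov right factor u_R satisfies u_R ≤_lex v. -/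
section Aux

variable {X : Type*} [LinearOrder X]

theorem plt_nil_left (v : List X) : ¬ PLt [] v := by
  rintro (⟨h, hne⟩ | ⟨r, s, t, x, y, hxy, h1, h2⟩)
  · exact hne (List.prefix_nil.mp h) |>.elim
  · simp at h1

theorem plt_nil_right {u : List X} : PLt u [] ↔ u ≠ [] := by
  constructor
  · rintro (⟨h, hne⟩ | ⟨r, s, t, x, y, hxy, h1, h2⟩)
    · exact fun h' => hne h'.symm
    · simp at h2
  · intro h; exact Or.inl ⟨List.nil_prefix, fun h' => h h'.symm⟩

theorem plt_cons {x y : X} {s t : List X} :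
    PLt (x :: s) (y :: t) ↔ x < y ∨ (x = y ∧ PLt s t) := by
  constructor
  · rintro (⟨⟨c, hc⟩, hne⟩ | ⟨r, a, b, p, q, hpq, h1, h2⟩)
    · obtain ⟨hyx, hts⟩ : y = x ∧ t ++ c = s := by
        simpa using hc
      refine Or.inr ⟨hyx.symm, Or.inl ⟨⟨c, hts⟩, fun h => hne ?_⟩⟩
      rw [hyx, h]
    · cases r with
      | nil =>
        simp only [List.nil_append, List.cons.injEq] at h1 h2
        exact Or.inl (h1.1 ▸ h2.1 ▸ hpq)
      | cons z r =>
        simp only [List.cons_append, List.cons.injEq] at h1 h2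
        exact Or.inr ⟨h1.1.trans h2.1.symm,
          Or.inr ⟨r, a, b, p, q, hpq, h1.2, h2.2⟩⟩
  · rintro (h | ⟨rfl, ⟨hp, hne⟩ | ⟨r, a, b, p, q, hpq, h1, h2⟩⟩)
    · exact Or.inr ⟨[], s, t, x, y, h, rfl, rfl⟩
    · exact Or.inl ⟨List.cons_prefix_cons.mpr ⟨rfl, hp⟩, by simp [hne]⟩
    · exact Or.inr ⟨x :: r, a, b, p, q, hpq, by simp [h1], by simp [h2]⟩

theorem plt_irrefl (u : List X) : ¬ PLt u u := by
  induction u with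
  | nil => exact plt_nil_left []
  | cons x s ih =>
    intro h
    rcases plt_cons.mp h with h | ⟨_, h⟩
    · exact absurd h (lt_irrefl x)
    · exact ih h

theorem plt_asymm : ∀ {u v : List X}, PLt u v → PLt v u → False := by
  intro u
  induction u with
  | nil => intro v h _; exact plt_nil_left v h
  | cons x s ih =>
    intro v h1 h2
    cases v with
    | nil => exact plt_nil_left _ h2
    | cons y t =>
      rcases plt_cons.mp h1 with h1' | ⟨rfl, h1'⟩ <;>
        rcases plt_cons.mp h2 with h2' | ⟨he, h2'⟩
      · exact absurd (h1'.trans h2') (lt_irrefl x)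
      · exact absurd (he ▸ h1') (lt_irrefl x)
      · exact absurd h2' (lt_irrefl x)
      · exact ih h1' h2'

theorem plt_trans : ∀ {u v w : List X}, PLt u v → PLt v w → PLt u w := by
  intro u
  induction u with
  | nil => intro v w h _; exact absurd h (plt_nil_left v)
  | cons x s ih =>
    intro v w h1 h2
    cases v with
    | nil => exact absurd h2 (plt_nil_left w)
    | cons y t =>
      cases w with
      | nil => exact plt_nil_right.mpr (by simp)
      | cons z r =>
        rcases plt_cons.mp h1 with h1' | ⟨rfl, h1'⟩ <;>
          rcases plt_cons.mp h2 with h2' | ⟨he, h2'⟩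
        · exact plt_cons.mpr (Or.inl (h1'.trans h2'))
        · exact plt_cons.mpr (Or.inl (he ▸ h1'))
        · exact plt_cons.mpr (Or.inl h2')
        · exact plt_cons.mpr (Or.inr ⟨he, ih h1' h2'⟩)

theorem plt_total : ∀ (u v : List X), PLt u v ∨ u = v ∨ PLt v u := by
  intro u
  induction u with
  | nil =>
    intro v
    cases v with
    | nil => exact Or.inr (Or.inl rfl)
    | cons y t => exact Or.inr (Or.inr (plt_nil_right.mpr (by simp)))
  | cons x s ih =>
    intro v
    cases v with
    | nil => exact Or.inl (plt_nil_right.mpr (by simp))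
    | cons y t =>
      rcases lt_trichotomy x y with h | rfl | h
      · exact Or.inl (plt_cons.mpr (Or.inl h))
      · rcases ih t with h | rfl | h
        · exact Or.inl (plt_cons.mpr (Or.inr ⟨rfl, h⟩))
        · exact Or.inr (Or.inl rfl)
        · exact Or.inr (Or.inr (plt_cons.mpr (Or.inr ⟨rfl, h⟩)))
      · exact Or.inr (Or.inr (plt_cons.mpr (Or.inl h)))

theorem plt_append_left : ∀ (a b : List X), b ≠ [] → PLt (a ++ b) a := by
  intro a
  induction a with
  | nil => intro b hb; simpa using plt_nil_right.mpr hb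
  | cons x a ih => intro b hb; exact plt_cons.mpr (Or.inr ⟨rfl, ih b hb⟩)

theorem plt_cancel_left : ∀ (w b c : List X), PLt (w ++ b) (w ++ c) ↔ PLt b c := by
  intro w
  induction w with
  | nil => intro b c; rfl
  | cons x w ih =>
    intro b c
    simp only [List.cons_append, plt_cons, lt_irrefl, false_or, true_and, ih]

theorem plt_cancel_right : ∀ (a b c : List X), PLt (a ++ c) (b ++ c) →
    a.length = b.length → PLt a b := by
  intro a
  induction a with
  | nil =>
    intro b c h hl
    have hb : b = [] := List.length_eq_zero_iff.mp hl.symm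
    subst hb
    exact absurd h (plt_irrefl c)
  | cons x a ih =>
    intro b c h hl
    cases b with
    | nil => simp at hl
    | cons y b =>
      rcases plt_cons.mp h with h' | ⟨he, h'⟩
      · exact plt_cons.mpr (Or.inl h')
      · exact plt_cons.mpr (Or.inr ⟨he, ih b c h' (by simpa using hl)⟩)

theorem ple_trans {u v w : List X} (h1 : PLe u v) (h2 : PLe v w) : PLe u w := by
  rcases h1 with h1 | rfl
  · rcases h2 with h2 | rfl
    · exact Or.inl (plt_trans h1 h2)
    · exact Or.inl h1
  · exact h2

theorem not_ple_plt {u v : List X} (h1 : PLe u v) (h2 : PLt v u) : False := by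
  rcases h1 with h1 | rfl
  · exact plt_asymm h1 h2
  · exact plt_irrefl u h2

theorem ple_cancel_left {w b c : List X} (h : PLe (w ++ b) (w ++ c)) : PLe b c := by
  rcases h with h | h
  · exact Or.inl ((plt_cancel_left w b c).mp h)
  · exact Or.inr (List.append_cancel_left h)

/-- If `s ≤ v` and `s ≠ []`, then `s ++ v < v`. -/
theorem plt_append_self {s v : List X} (hs : s ≠ []) (h : PLe s v) : PLt (s ++ v) v := by
  rcases h with (⟨hp, hne⟩ | ⟨r, α, β, x, y, hxy, h1, h2⟩) | rfl
  · refine Or.inl ⟨hp.trans (List.prefix_append s v), fun he => hs ?_⟩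
    have : (s ++ v).length = v.length := by rw [← he]
    simp at this
    exact this
  · exact Or.inr ⟨r, α ++ v, β, x, y, hxy, by rw [h1]; simp, h2⟩
  · exact plt_append_left s s hs

/-- Every nonempty proper suffix of a Lyndon word is strictly smaller than it. -/
theorem suffix_plt {v p s : List X} (hv : IsLyndon v) (hp : p ≠ []) (hs : s ≠ [])
    (hps : v = p ++ s) : PLt s v := by
  have h := hv.2 p s hps hp hs
  rcases h with ⟨hpre, hne⟩ | ⟨r, α, β, x, y, hxy, h1, h2⟩
  · exact absurd (hpre.eq_of_length (by rw [hps]; simp [Nat.add_comm])) hne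
  · rcases lt_or_ge r.length s.length with hr | hr
    · have hpre1 : r ++ [x] <+: s ++ p := ⟨α, by simp [← h1]⟩
      have hpre2 : s <+: s ++ p := List.prefix_append s p
      have hrs : r ++ [x] <+: s :=
        List.prefix_of_prefix_length_le hpre1 hpre2 (by simp; omega)
      obtain ⟨s₁, hs₁⟩ := hrs
      exact Or.inr ⟨r, s₁, β, x, y, hxy, by rw [← hs₁]; simp, h2⟩
    · have hpre1 : s <+: s ++ p := List.prefix_append s p
      have hpre2 : r <+: s ++ p := ⟨x :: α, h1.symm⟩
      have hsr : s <+: r := List.prefix_of_prefix_length_le hpre1 hpre2 hr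
      have hsv : s <+: v := hsr.trans ⟨y :: β, h2.symm⟩
      obtain ⟨w, hw⟩ := hsv
      have hwne : w ≠ [] := by
        rintro rfl
        simp only [List.append_nil] at hw
        have : v.length = p.length + s.length := by rw [hps]; simp
        have h0 : p.length = 0 := by rw [← hw] at this; omega
        exact hp (List.length_eq_zero_iff.mp h0)
      have h3 := hv.2 p s hps hp hs
      rw [← hw] at h3
      have hpw : PLt p w := (plt_cancel_left s p w).mp h3
      have h4 := hv.2 s w hw.symm hs hwne
      rw [hps] at h4
      have hwp : PLt w p := plt_cancel_right w p s h4 (by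
        have : v.length = p.length + s.length := by rw [hps]; simp
        have h5 : v.length = s.length + w.length := by rw [← hw]; simp
        omega)
      exact absurd hpw (fun h => plt_asymm h hwp)

end Aux

/-- Let `u, v` be Lyndon words with `u >_lex v`. Then `Sh(uv) = (u, v)` (i.e. `v` is the
lexicographically largest nonempty proper suffix of `uv`) iff either `u` is a single letter,
or `u` has length `≥ 2` and its Shirshov right factor `uR` satisfies `uR ≤_lex v`. -/
theorem shirshov_append_iff {X : Type*} [LinearOrder X] (u v uL uR : List X)
    (hu : IsLyndon u) (hv : IsLyndon v) (hlt : PLt v u)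
    (hfac : 2 ≤ u.length → u = uL ++ uR ∧ uL ≠ [] ∧ uR ≠ [] ∧
      ∀ a b : List X, u = a ++ b → a ≠ [] → b ≠ [] → PLe b uR) :
    (∀ a b : List X, u ++ v = a ++ b → a ≠ [] → b ≠ [] → PLe b v) ↔
      (u.length = 1 ∨ (2 ≤ u.length ∧ PLe uR v)) := by
  constructor
  · intro hL
    by_cases h1 : u.length = 1
    · exact Or.inl h1
    · have hu1 : 1 ≤ u.length := List.length_pos_iff.mpr hu.1
      have h2 : 2 ≤ u.length := by omega
      obtain ⟨hul, hLne, hRne, hmax⟩ := hfac h2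
      refine Or.inr ⟨h2, ?_⟩
      have hbv : PLe (uR ++ v) v :=
        hL uL (uR ++ v) (by rw [hul, List.append_assoc]) hLne
          (by simp [hRne])
      rcases plt_total uR v with h | h | h
      · exact Or.inl h
      · exact Or.inr h
      · exfalso
        rcases h with ⟨hpre, hne⟩ | ⟨r, s', t', x, y, hxy, hv1, hv2⟩
        · obtain ⟨w, hw⟩ := hpre
          have hwne : w ≠ [] := by
            rintro rfl
            simp only [List.append_nil] at hw
            exact hne hw
          rw [← hw] at hbv
          have hvw : PLe v w := by rw [← hw]; exact ple_cancel_left hbv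
          exact not_ple_plt hvw (suffix_plt hv hRne hwne hw.symm)
        · have hvlt : PLt v (uR ++ v) :=
            Or.inr ⟨r, s', t' ++ v, x, y, hxy, hv1, by rw [hv2]; simp⟩
          exact not_ple_plt hbv hvlt
  · intro hR a b hab ha hb
    rcases List.append_eq_append_iff.mp hab with ⟨w, hw1, hw2⟩ | ⟨w, hw1, hw2⟩
    · -- a = u ++ w, v = w ++ b
      by_cases hwne : w = []
      · subst hwne
        simp only [List.nil_append] at hw2
        exact Or.inr hw2.symm
      · exact Or.inl (suffix_plt hv hwne hb hw2)
    · -- u = a ++ w, b = w ++ v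
      by_cases hwne : w = []
      · subst hwne
        simp only [List.nil_append] at hw2
        exact Or.inr hw2
      · have h2 : 2 ≤ u.length := by
          rw [hw1]
          have h3 := List.length_pos_iff.mpr ha
          have h4 := List.length_pos_iff.mpr hwne
          simp only [List.length_append]
          omega
        rcases hR with h1 | ⟨_, hRv⟩
        · omega
        · obtain ⟨hul, hLne, hRne, hmax⟩ := hfac h2
          have hwR : PLe w uR := hmax a w hw1 ha hwne
          have hwv : PLe w v := ple_trans hwR hRv
          exact Or.inl (hw2 ▸ plt_append_self hwne hwv)
end

section
/- Assume the convention under which the biggest letter occurring in a Lyndon word always occurs at the left-most position. Let X be a well-ordered alphabet, X' ⊆ X a subset such that x₁ < x₂ for all x₁ ∈ X' and x₂ ∈ X \ X', and let v be a Lyndon word on X'. Then every Lyndon word u on X with u <_lex v consists only of letters from X'. -/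
/-- In a Lyndon word (for this order) the first letter is the largest letter. -/
lemma lyndon_head_max {X : Type*} [LinearOrder X] {x : X} {s : List X}
    (h : IsLyndon (x :: s)) : ∀ y ∈ s, y ≤ x := by
  intro y hy
  obtain ⟨a, b, rfl⟩ := List.append_of_mem hy
  have := h.2 (x :: a) (y :: b) (by simp) (by simp) (by simp)
  rcases this with ⟨hpre, hne⟩ | ⟨r, s', t, x', y', hxy, h1, h2⟩
  · exfalso
    apply hne
    apply hpre.eq_of_length
    simp [Nat.add_comm, Nat.add_left_comm]
  · cases r with
    | nil =>
      simp at h1 h2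
      exact le_of_lt (h1.1 ▸ h2.1 ▸ hxy)
    | cons z r' =>
      have hy' : y = z := by simpa using congrArg (·.head?) h1
      have hx' : x = z := by simpa using congrArg (·.head?) h2
      simp [hy', hx']

/-- Let `X' ⊆ X` with every element of `X'` smaller than every element of `X \ X'`.
If `v` is a Lyndon word all of whose letters lie in `X'`, then every Lyndon word
lexicographically smaller than `v` consists only of letters of `X'`. -/
theorem lyndon_lt_letters_mem {X : Type*} [LinearOrder X] (X' : Set X)
    (hX' : ∀ x₁ ∈ X', ∀ x₂ ∉ X', x₁ < x₂)
    (v : List X) (hv : IsLyndon v) (hvX' : ∀ x ∈ v, x ∈ X')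
    (u : List X) (hu : IsLyndon u) (hlt : PLt u v) :
    ∀ x ∈ u, x ∈ X' := by
  intro x0 hx0
  by_contra hx0'
  obtain ⟨u₀, u', rfl⟩ := List.exists_cons_of_ne_nil hu.1
  obtain ⟨v₀, v', rfl⟩ := List.exists_cons_of_ne_nil hv.1
  have hmax : x0 ≤ u₀ := by
    rcases List.mem_cons.mp hx0 with rfl | h
    · exact le_rfl
    · exact lyndon_head_max hu x0 h
  have hv₀ : v₀ ∈ X' := hvX' v₀ (by simp)
  -- In every case we derive u₀ ≤ v₀ (in fact heads equal or u₀ < v₀)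
  have hle : u₀ ≤ v₀ := by
    rcases hlt with ⟨hpre, _⟩ | ⟨r, s', t, x', y', hxy, h1, h2⟩
    · have : v₀ = u₀ := by
        obtain ⟨w, hw⟩ := hpre
        have := congrArg (·.head?) hw
        simpa using this
      exact le_of_eq this.symm
    · cases r with
      | nil =>
        simp at h1 h2
        exact le_of_lt (h1.1 ▸ h2.1 ▸ hxy)
      | cons z r' =>
        have h1' : u₀ = z := by simpa using congrArg (·.head?) h1
        have h2' : v₀ = z := by simpa using congrArg (·.head?) h2
        simp [h1', h2']
  have : v₀ < x0 := hX' v₀ hv₀ x0 hx0'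
  exact absurd (lt_of_lt_of_le this hmax) (not_lt.mpr hle)
end

section
/- Let I be an ideal of the free algebra k⟨X⟩ with respect to the graded lex order. Then the set of I-irreducible words is contained in the set B_I of lexicographically nondecreasing products of I-irreducible Lyndon words; moreover these two sets are equal if and only if every obstruction of I is a Lyndon word. -/
/-- The graded lex order: compare first by degree, then by `<_lex`. -/
def GLt {X : Type*} [LinearOrder X] (deg : X → ℕ) (u v : List X) : Prop :=
  (u.map deg).sum < (v.map deg).sum ∨ ((u.map deg).sum = (v.map deg).sum ∧ PLt u v)

/-- The free algebra `k⟨X⟩`, with the words on `X` as a basis. -/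
abbrev FreeAlg (k X : Type*) [Field k] := MonoidAlgebra k (FreeMonoid X)

/-- `w` is the leading word of `f` with respect to the order `lt` on words. -/
def IsLeadingWord {k X : Type*} [Field k] (lt : FreeMonoid X → FreeMonoid X → Prop)
    (f : FreeAlg k X) (w : FreeMonoid X) : Prop :=
  w ∈ f.coeff.support ∧ ∀ u ∈ f.coeff.support, u ≠ w → lt u w

/-- A word is reducible with respect to a set `S ⊆ k⟨X⟩` if it is the leading word of a
nonzero element of `S`. -/
def Reducible {k X : Type*} [Field k] (lt : FreeMonoid X → FreeMonoid X → Prop)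
    (S : Set (FreeAlg k X)) (w : FreeMonoid X) : Prop :=
  ∃ f ∈ S, f ≠ 0 ∧ IsLeadingWord lt f w

/-- `v` is a factor of `u`. -/
def IsFactor {X : Type*} (v u : FreeMonoid X) : Prop := ∃ a b : FreeMonoid X, u = a * v * b

namespace List

variable {α : Type*}

theorem infix_append_cases {v l F : List α} (h : v <:+: l ++ F) :
    v <:+: l ∨ v <:+: F ∨ ∃ s t, s ≠ [] ∧ t ≠ [] ∧ v = s ++ t ∧ s <:+ l ∧ t <+: F := by
  obtain ⟨a, b, h⟩ := h
  rw [append_assoc] at h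
  rcases append_eq_append_iff.mp h with ⟨a', rfl, h'⟩ | ⟨c, rfl, rfl⟩
  · rcases append_eq_append_iff.mp h' with ⟨d, rfl, -⟩ | ⟨e, rfl, rfl⟩
    · exact Or.inl ⟨a, d, by simp⟩
    · rcases eq_or_ne a' [] with rfl | ha'
      · exact Or.inr (Or.inl (by simpa using infix_append_left))
      rcases eq_or_ne e [] with rfl | he
      · exact Or.inl (by simpa using infix_append_right)
      exact Or.inr (Or.inr ⟨a', e, ha', he, rfl, suffix_append a a', prefix_append e b⟩)
  · exact Or.inr (Or.inl (infix_append' c v b))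

variable [LinearOrder α] {u v : List α}

theorem lt_append_self {t : List α} (ht : t ≠ []) : u < u ++ t := by
  induction u with
  | nil => obtain ⟨a, t, rfl⟩ := exists_cons_of_ne_nil ht; exact nil_lt_cons a t
  | cons a u ih => exact cons_lt_cons_iff.mpr (Or.inr ⟨rfl, ih⟩)

theorem le_append_self (t : List α) : u ≤ u ++ t := by
  rcases eq_or_ne t [] with rfl | ht
  · simp
  · exact (lt_append_self ht).le

theorem append_lt_of_lt_of_not_prefix (h : u < v) (hp : ¬ u <+: v) (w : List α) :
    u ++ w < v := by
  induction h with
  | nil => exact absurd nil_prefix hp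
  | rel hab => exact Lex.rel hab
  | cons _ ih => exact Lex.cons (ih fun h => hp (prefix_cons_inj _ |>.mpr h))

theorem append_lt_append_left_iff {s : List α} : s ++ u < s ++ v ↔ u < v := by
  induction s <;> simp [*]

theorem append_lt_append_of_length_eq (h : u < v) (hl : u.length = v.length) (w : List α) :
    u ++ w < v ++ w :=
  (append_lt_of_lt_of_not_prefix h (fun hp => h.ne (hp.eq_of_length hl)) w).trans_le
    (le_append_self w)

theorem lt_iff_prefix_or_exists_cons :
    u < v ↔ (u <+: v ∧ u ≠ v) ∨
      ∃ (r s t : List α) (x y : α), x < y ∧ u = r ++ x :: s ∧ v = r ++ y :: t := by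
  constructor
  · intro h
    induction h with
    | nil => exact Or.inl ⟨nil_prefix, (cons_ne_nil _ _).symm⟩
    | @rel a s b t hab => exact Or.inr ⟨[], s, t, a, b, hab, rfl, rfl⟩
    | @cons a s t _ ih =>
      rcases ih with ⟨hp, hne⟩ | ⟨r, s', t', x, y, hxy, rfl, rfl⟩
      · exact Or.inl ⟨(prefix_cons_inj a).mpr hp, by simpa using hne⟩
      · exact Or.inr ⟨a :: r, s', t', x, y, hxy, rfl, rfl⟩
  · rintro (⟨⟨c, rfl⟩, hne⟩ | ⟨r, s, t, x, y, hxy, rfl, rfl⟩)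
    · exact lt_append_self (by rintro rfl; simp at hne)
    · exact append_left_lt (cons_lt_cons_iff.mpr (Or.inl hxy))

end List

section Lyndon

open List

variable {α : Type*} [LinearOrder α] {u v w p s t : List α}

def IsLyndonWord (w : List α) : Prop :=
  w ≠ [] ∧ ∀ p s, w = p ++ s → p ≠ [] → s ≠ [] → w < s

theorem IsLyndonWord.le_of_eq_append (hw : IsLyndonWord w) (h : w = p ++ s) (hs : s ≠ []) :
    w ≤ s := by
  rcases eq_or_ne p [] with rfl | hp
  · exact (h.trans (nil_append s)).le
  · exact (hw.2 p s h hp hs).le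

theorem isLyndonWord_iff_lt_rotations :
    IsLyndonWord w ↔ w ≠ [] ∧ ∀ p s, w = p ++ s → p ≠ [] → s ≠ [] → w < s ++ p := by
  refine ⟨fun hw => ⟨hw.1, fun p s h hp hs => (hw.2 p s h hp hs).trans_le (le_append_self p)⟩,
    fun ⟨hne, hrot⟩ => ⟨hne, fun p s h hp hs => ?_⟩⟩
  by_contra hsw
  rw [not_lt] at hsw
  by_cases hpre : s <+: w
  · obtain ⟨r, hr⟩ := hpre
    have hlen : p.length = r.length := by
      have := congrArg length (h.symm.trans hr.symm)
      simp only [length_append] at this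
      omega
    have hr0 : r ≠ [] := by rintro rfl; exact hp (by simpa using hlen)
    have hrp : r < p := append_lt_append_left_iff.mp (hr ▸ hrot p s h hp hs)
    have hpr : p ++ s < r ++ s := h ▸ hrot s r hr.symm hs hr0
    exact (append_lt_append_of_length_eq hrp hlen.symm s).not_gt hpr
  · have hsw' : s < w := hsw.lt_of_ne fun he => hpre (he ▸ prefix_refl s)
    exact (append_lt_of_lt_of_not_prefix hsw' hpre p).not_gt (hrot p s h hp hs)

theorem isLyndonWord_singleton (a : α) : IsLyndonWord [a] := by
  refine ⟨cons_ne_nil a [], fun p s h hp hs => ?_⟩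
  have hlen := congrArg length h
  rw [length_singleton, length_append] at hlen
  have := length_pos_iff.mpr hp
  have := length_pos_iff.mpr hs
  omega

theorem IsLyndonWord.append (hu : IsLyndonWord u) (hv : IsLyndonWord v) (huv : u < v) :
    IsLyndonWord (u ++ v) := by
  have huvv : u ++ v < v := by
    by_cases hpre : u <+: v
    · obtain ⟨t, rfl⟩ := hpre
      have ht : t ≠ [] := by rintro rfl; simp at huv
      exact append_left_lt (hv.2 u t rfl hu.1 ht)
    · exact append_lt_of_lt_of_not_prefix huv hpre v
  refine ⟨by simp [hu.1], fun p s h hp hs => ?_⟩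
  rcases append_eq_append_iff.mp h with ⟨a, -, hv'⟩ | ⟨c, hu', rfl⟩
  · exact huvv.trans_le (hv.le_of_eq_append hv' hs)
  · rcases eq_or_ne c [] with rfl | hc
    · simpa using huvv
    have hlen : u.length = p.length + c.length := by simp [hu']
    have hnp : ¬ u <+: c := fun hpre => by
      have := hpre.length_le
      have := length_pos_iff.mpr hp
      omega
    exact (append_lt_of_lt_of_not_prefix (hu.2 p c hu' hp hc) hnp v).trans_le
      (le_append_self v)

theorem exists_lyndon_factorization_append {L : List (List α)}
    (hL : ∀ l ∈ L, IsLyndonWord l) (hc : L.IsChain (· ≥ ·)) (hu : IsLyndonWord u) :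
    ∃ L' : List (List α), (∀ l ∈ L', IsLyndonWord l) ∧ L'.IsChain (· ≥ ·) ∧
      L'.flatten = u ++ L.flatten := by
  induction L generalizing u with
  | nil => exact ⟨[u], by simpa using hu, isChain_singleton u, by simp⟩
  | cons l L ih =>
    by_cases hlu : l ≤ u
    · exact ⟨u :: l :: L, by simpa [hu] using hL, isChain_cons_cons.mpr ⟨hlu, hc⟩, rfl⟩
    · obtain ⟨L', hL', hc', hflat⟩ := ih (fun m hm => hL m (mem_cons_of_mem l hm)) hc.tail
        (hu.append (hL l mem_cons_self) (lt_of_not_ge hlu))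
      exact ⟨L', hL', hc', by simp [hflat]⟩

theorem exists_lyndon_factorization (w : List α) :
    ∃ L : List (List α), (∀ l ∈ L, IsLyndonWord l) ∧ L.IsChain (· ≥ ·) ∧ L.flatten = w := by
  induction w with
  | nil => exact ⟨[], by simp, isChain_nil, rfl⟩
  | cons a w ih =>
    obtain ⟨L, hL, hc, rfl⟩ := ih
    exact exists_lyndon_factorization_append hL hc (isLyndonWord_singleton a)

theorem IsLyndonWord.not_prefix_flatten (hv : IsLyndonWord v) {M : List (List α)}
    (hM : ∀ m ∈ M, m < v) (hvt : v = p ++ t) (hp : p ≠ []) (ht : t ≠ []) :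
    ¬ t <+: M.flatten := by
  induction M generalizing p t with
  | nil => simpa using ht
  | cons m M ih =>
    intro h
    have htm : ¬ t <+: m := by
      rintro ⟨c, rfl⟩
      exact (hv.2 p _ hvt hp ht).not_ge ((le_append_self c).trans (hM _ mem_cons_self).le)
    obtain ⟨t', rfl⟩ := (prefix_or_prefix_of_prefix h (prefix_append m _)).resolve_left htm
    have ht' : t' ≠ [] := by rintro rfl; simp at htm
    exact ih (fun x hx => hM x (mem_cons_of_mem m hx)) (p := p ++ m) (by simp [hvt])
      (by simp [hp]) ht' ((prefix_append_right_inj m).mp (by simpa using h))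

theorem IsLyndonWord.exists_infix_of_infix_flatten (hv : IsLyndonWord v) {L : List (List α)}
    (hL : ∀ l ∈ L, IsLyndonWord l) (hP : L.Pairwise (· ≥ ·)) (h : v <:+: L.flatten) :
    ∃ l ∈ L, v <:+: l := by
  induction L with
  | nil => exact absurd (infix_nil.mp h) hv.1
  | cons l L ih =>
    rw [flatten_cons] at h
    rcases infix_append_cases h with h | h | ⟨s, t, hs, ht, rfl, ⟨q, hq⟩, htF⟩
    · exact ⟨l, mem_cons_self, h⟩
    · obtain ⟨l', hl', h'⟩ := ih (fun m hm => hL m (mem_cons_of_mem l hm)) hP.of_cons h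
      exact ⟨l', mem_cons_of_mem l hl', h'⟩
    · have hls : l ≤ s := (hL l mem_cons_self).le_of_eq_append hq.symm hs
      have hM : ∀ m ∈ L, m < s ++ t := fun m hm =>
        ((rel_of_pairwise_cons hP hm).trans hls).trans_lt (lt_append_self ht)
      exact absurd htF (hv.not_prefix_flatten hM rfl hs ht)

end Lyndon

section PaperOrder

open List

variable {X : Type*} [LinearOrder X] {u v : List X}

/-- The identity, retyping a word over `X` as a word over `Xᵒᵈ`: the paper's `<_lex` is the
reverse of the usual lexicographic order on words over `Xᵒᵈ`. -/
def toDualWord (u : List X) : List Xᵒᵈ := u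

theorem pLt_iff_lt_dual : PLt u v ↔ toDualWord v < toDualWord u := by
  rw [lt_iff_prefix_or_exists_cons, PLt]
  refine or_congr Iff.rfl ⟨?_, ?_⟩ <;>
    rintro ⟨r, s, t, x, y, hxy, hu, hv⟩ <;> exact ⟨r, t, s, y, x, hxy, hv, hu⟩

theorem pLe_iff_le_dual : PLe u v ↔ toDualWord v ≤ toDualWord u := by
  rw [PLe, pLt_iff_lt_dual, le_iff_lt_or_eq, eq_comm (a := u)]
  rfl

theorem isLyndon_iff_isLyndonWord_dual : IsLyndon u ↔ IsLyndonWord (toDualWord u) := by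
  simp only [IsLyndon, pLt_iff_lt_dual, isLyndonWord_iff_lt_rotations]
  rfl

theorem isChain_pLe_iff {L : List (List X)} :
    L.IsChain PLe ↔ L.IsChain fun u v => toDualWord v ≤ toDualWord u :=
  IsChain.iff fun _ _ => pLe_iff_le_dual

theorem exists_pLe_lyndon_factorization (w : List X) :
    ∃ L : List (List X), (∀ l ∈ L, IsLyndon l) ∧ L.IsChain PLe ∧ L.flatten = w := by
  obtain ⟨L, hL, hc, hw⟩ := exists_lyndon_factorization (toDualWord w)
  exact ⟨L, fun l hl => isLyndon_iff_isLyndonWord_dual.mpr (hL l hl), isChain_pLe_iff.mpr hc, hw⟩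

theorem IsLyndon.exists_infix_of_infix_flatten (hv : IsLyndon v) {L : List (List X)}
    (hL : ∀ l ∈ L, IsLyndon l) (hc : L.IsChain PLe) (h : v <:+: L.flatten) :
    ∃ l ∈ L, v <:+: l := by
  have hL' : ∀ l ∈ L, IsLyndonWord (toDualWord l) := fun l hl =>
    isLyndon_iff_isLyndonWord_dual.mp (hL l hl)
  have hc' : @IsChain (List Xᵒᵈ) (· ≥ ·) L := (isChain_pLe_iff (X := X)).mp hc
  -- `α := Xᵒᵈ` must be given: unification from `L : List (List X)` would pick `α := X`.
  exact @IsLyndonWord.exists_infix_of_infix_flatten Xᵒᵈ _ (toDualWord v)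
    (isLyndon_iff_isLyndonWord_dual.mp hv) L hL' (isChain_iff_pairwise.mp hc') h

theorem gLt_append_append {deg : X → ℕ} (hdeg : ∀ x, 0 < deg x) (h : GLt deg u v)
    (a b : List X) : GLt deg (a ++ u ++ b) (a ++ v ++ b) := by
  rcases h with h | ⟨hdeg_eq, hlt⟩
  · left
    simp only [map_append, sum_append]
    omega
  refine Or.inr ⟨by simp [hdeg_eq], ?_⟩
  rcases hlt with ⟨⟨c, rfl⟩, hne⟩ | ⟨r, s, t, x, y, hxy, rfl, rfl⟩
  · obtain _ | ⟨x, c⟩ := c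
    · simp at hne
    · have := hdeg x
      simp only [map_append, map_cons, sum_append, sum_cons] at hdeg_eq
      omega
  · exact Or.inr ⟨a ++ r, s ++ b, t ++ b, x, y, hxy, by simp, by simp⟩

end PaperOrder

section Words

variable {X : Type*}

theorem isFactor_iff_infix {v w : FreeMonoid X} : IsFactor v w ↔ v.toList <:+: w.toList := by
  constructor
  · rintro ⟨a, b, rfl⟩
    exact ⟨a.toList, b.toList, by simp⟩
  · rintro ⟨a, b, h⟩
    exact ⟨FreeMonoid.ofList a, FreeMonoid.ofList b, FreeMonoid.toList.injective (by simp [h])⟩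

def IsObstruction (Red : FreeMonoid X → Prop) (o : FreeMonoid X) : Prop :=
  Red o ∧ ∀ o', IsFactor o' o → o' ≠ o → ¬ Red o'

theorem exists_isObstruction_isFactor {Red : FreeMonoid X → Prop} {w : FreeMonoid X}
    (hw : Red w) : ∃ o, IsFactor o w ∧ IsObstruction Red o := by
  obtain ⟨o, ⟨how, ho⟩, hmin⟩ := (measure fun o : FreeMonoid X => o.toList.length).wf.has_min
    {o | IsFactor o w ∧ Red o} ⟨w, isFactor_iff_infix.mpr (List.infix_refl _), hw⟩
  refine ⟨o, how, ho, fun o' ho'o hne hRed' => hmin o' ⟨?_, hRed'⟩ ?_⟩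
  · exact isFactor_iff_infix.mpr ((isFactor_iff_infix.mp ho'o).trans (isFactor_iff_infix.mp how))
  · have h := isFactor_iff_infix.mp ho'o
    exact h.length_le.lt_of_ne fun hl =>
      hne (FreeMonoid.toList.injective (h.eq_of_length hl))

end Words

section Ideal

variable {k X : Type*} [Field k]

theorem Reducible.of_isFactor {lt : FreeMonoid X → FreeMonoid X → Prop}
    (hlt : ∀ a b u v, lt u v → lt (a * u * b) (a * v * b)) {I : TwoSidedIdeal (FreeAlg k X)}
    {v w : FreeMonoid X} (hv : Reducible lt (I : Set (FreeAlg k X)) v) (h : IsFactor v w) :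
    Reducible lt (I : Set (FreeAlg k X)) w := by
  obtain ⟨a, b, rfl⟩ := h
  obtain ⟨f, hfI, -, hvf, hlead⟩ := hv
  set g : FreeAlg k X := MonoidAlgebra.single a 1 * f * MonoidAlgebra.single b 1
  have hsupp : ∀ x, x ∈ g.coeff.support ↔ ∃ u ∈ f.coeff.support, a * u * b = x := by
    intro x
    rw [MonoidAlgebra.support_coeff_mul_single _ _ (by simp),
      MonoidAlgebra.support_coeff_single_mul _ _ (by simp)]
    simp
  have hvg : a * v * b ∈ g.coeff.support := (hsupp _).mpr ⟨v, hvf, rfl⟩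
  refine ⟨g, I.mul_mem_right _ _ (I.mul_mem_left _ _ hfI), ?_, hvg, fun x hx hne => ?_⟩
  · intro hg
    simp [hg] at hvg
  · obtain ⟨u, hu, rfl⟩ := (hsupp x).mp hx
    exact hlt a b u v (hlead u hu fun huv => hne (huv ▸ rfl))

end Ideal

section Obstructions

variable {X : Type*} [LinearOrder X] {Red : FreeMonoid X → Prop}

/-- The set `B_I` of the paper, with `Red` in place of `I`-reducibility. -/
def lyndonProducts (Red : FreeMonoid X → Prop) : Set (FreeMonoid X) :=
  {w | ∃ L : List (List X), (∀ v ∈ L, IsLyndon v ∧ ¬ Red (FreeMonoid.ofList v)) ∧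
    L.IsChain PLe ∧ L.flatten = w.toList}

theorem setOf_not_subset_lyndonProducts (hRed : ∀ {v w}, IsFactor v w → Red v → Red w) :
    {w | ¬ Red w} ⊆ lyndonProducts Red := by
  intro w hw
  obtain ⟨L, hL, hc, hflat⟩ := exists_pLe_lyndon_factorization w.toList
  refine ⟨L, fun v hv => ⟨hL v hv, fun hv' => hw (hRed ?_ hv')⟩, hc, hflat⟩
  rw [isFactor_iff_infix, FreeMonoid.toList_ofList, ← hflat]
  exact List.infix_of_mem_flatten hv

theorem lyndonProducts_subset_setOf_not (hRed : ∀ {v w}, IsFactor v w → Red v → Red w)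
    (hObs : ∀ o, IsObstruction Red o → IsLyndon o.toList) :
    lyndonProducts Red ⊆ {w | ¬ Red w} := by
  rintro w ⟨L, hL, hc, hflat⟩ hw
  obtain ⟨o, how, ho⟩ := exists_isObstruction_isFactor hw
  obtain ⟨l, hl, hol⟩ := (hObs o ho).exists_infix_of_infix_flatten (fun l hl => (hL l hl).1) hc
    (hflat ▸ isFactor_iff_infix.mp how)
  exact (hL l hl).2 (hRed (isFactor_iff_infix.mpr (by simpa using hol)) ho.1)

theorem IsObstruction.isLyndon (hsub : lyndonProducts Red ⊆ {w | ¬ Red w}) {o : FreeMonoid X}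
    (ho : IsObstruction Red o) : IsLyndon o.toList := by
  obtain ⟨L, hL, hc, hflat⟩ := exists_pLe_lyndon_factorization o.toList
  by_contra hno
  refine hsub ⟨L, fun v hv => ⟨hL v hv, ho.2 _ ?_ ?_⟩, hc, hflat⟩ ho.1
  · rw [isFactor_iff_infix, FreeMonoid.toList_ofList, ← hflat]
    exact List.infix_of_mem_flatten hv
  · rintro rfl
    exact hno (hL v hv)

theorem setOf_not_eq_lyndonProducts_iff (hRed : ∀ {v w}, IsFactor v w → Red v → Red w) :
    {w | ¬ Red w} = lyndonProducts Red ↔ ∀ o, IsObstruction Red o → IsLyndon o.toList :=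
  ⟨fun h _ => IsObstruction.isLyndon h.ge, fun h =>
    (setOf_not_subset_lyndonProducts hRed).antisymm (lyndonProducts_subset_setOf_not hRed h)⟩

end Obstructions

/-- The set of `I`-irreducible words is contained in the set `B_I` of lexicographically
nondecreasing products of `I`-irreducible Lyndon words, and the two sets are equal iff
every obstruction of `I` is a Lyndon word. Here leading words are taken with respect to
the graded lex order. -/
theorem irreducible_subset_BI {k X : Type*} [Field k] [LinearOrder X]
    (deg : X → ℕ) (hdeg : ∀ x, 0 < deg x)
    (I : TwoSidedIdeal (FreeAlg k X)) :
    letI glt : FreeMonoid X → FreeMonoid X → Prop :=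
      fun u v => GLt deg (FreeMonoid.toList u) (FreeMonoid.toList v)
    letI Irr : FreeMonoid X → Prop := fun w => ¬ Reducible glt (I : Set (FreeAlg k X)) w
    letI NI : Set (List X) := {v | IsLyndon v ∧ Irr (FreeMonoid.ofList v)}
    letI BI : Set (FreeMonoid X) := {w | ∃ L : List (List X),
      (∀ v ∈ L, v ∈ NI) ∧ L.Chain' PLe ∧ L.flatten = FreeMonoid.toList w}
    {w : FreeMonoid X | Irr w} ⊆ BI ∧
      ({w : FreeMonoid X | Irr w} = BI ↔
        ∀ o : FreeMonoid X, (Reducible glt (I : Set (FreeAlg k X)) o ∧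
            ∀ o' : FreeMonoid X, IsFactor o' o → o' ≠ o →
              ¬ Reducible glt (I : Set (FreeAlg k X)) o') →
          IsLyndon (FreeMonoid.toList o)) := by
  have hRed : ∀ {v w : FreeMonoid X}, IsFactor v w →
      Reducible (fun u v => GLt deg u.toList v.toList) (I : Set (FreeAlg k X)) v →
      Reducible (fun u v => GLt deg u.toList v.toList) (I : Set (FreeAlg k X)) w :=
    fun hvw hv => hv.of_isFactor (fun a b _ _ h => by
      simpa using gLt_append_append hdeg h a.toList b.toList) hvw
  exact ⟨setOf_not_subset_lyndonProducts hRed, setOf_not_eq_lyndonProducts_iff hRed⟩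
end

section
/- Let I be a proper ideal of the free algebra k⟨X⟩, X' ⊆ X a subset, and J = I ∩ k⟨X'⟩. Suppose G_I is the reduced Groebner basis of I with respect to an admissible order, and suppose the set of leading words of G_I restricted to words on X' equals the set of leading words of the reduced Groebner basis G_J of J. Then G_J = G_I ∩ k⟨X'⟩. -/
/-- `G` is a Groebner basis of the set `S ⊆ k⟨X⟩`: `G ⊆ S` and every `S`-reducible word
has a factor which is a leading word of some element of `G`. -/
def IsGroebnerBasis {k X : Type*} [Field k] (lt : FreeMonoid X → FreeMonoid X → Prop)
    (S G : Set (FreeAlg k X)) : Prop :=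
  G ⊆ S ∧ ∀ w : FreeMonoid X, Reducible lt S w →
    ∃ g ∈ G, g ≠ 0 ∧ ∃ wg : FreeMonoid X, IsLeadingWord lt g wg ∧ IsFactor wg w

/-- `G` is reduced: `0 ∉ G`, every `g ∈ G` is monic, and no word occurring in `g ∈ G` has
a factor which is a leading word of another element of `G`. -/
def IsReducedSet {k X : Type*} [Field k] (lt : FreeMonoid X → FreeMonoid X → Prop)
    (G : Set (FreeAlg k X)) : Prop :=
  (0 : FreeAlg k X) ∉ G ∧ ∀ f ∈ G,
    (∃ w : FreeMonoid X, IsLeadingWord lt f w ∧ f.coeff w = 1) ∧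
    ∀ u ∈ f.coeff.support, ∀ g ∈ G, g ≠ f →
      ∀ wg : FreeMonoid X, IsLeadingWord lt g wg → ¬ IsFactor wg u

/-!
If `g ∈ G_I` and `h ∈ G_J` have the same leading word `w`, then `g = h`: otherwise `g - h` is a
nonzero element of `I` whose leading word `w'` lies below `w` and occurs in `g` or in `h`, and
`w'` has a factor `v` which is the leading word of some element of `G_I`. If `w'` occurs in `g`,
this contradicts the reducedness of `G_I`; if it occurs in `h`, then `w'`, hence `v`, is a word on
`X'`, so `v` is also a leading word of `G_J`, contradicting the reducedness of `G_J`. The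
hypothesis on leading words then matches the elements of `G_J` with those of `G_I ∩ k⟨X'⟩` one by
one.
-/

section WellFoundedTotal

variable {α : Type*} {lt : α → α → Prop}

theorem lt_trans_of_wellFounded (hwf : WellFounded lt) (htot : ∀ u v, lt u v ∨ u = v ∨ lt v u)
    {a b c : α} (hab : lt a b) (hbc : lt b c) : lt a c := by
  rcases htot a c with hac | rfl | hca
  · exact hac
  · exact absurd hbc (hwf.asymmetric _ _ hab)
  · exact absurd hca (hwf.asymmetric₃ _ _ _ hab hbc)

theorem Finset.exists_forall_lt_of_wellFounded (hwf : WellFounded lt)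
    (htot : ∀ u v, lt u v ∨ u = v ∨ lt v u) {s : Finset α} (hs : s.Nonempty) :
    ∃ m ∈ s, ∀ u ∈ s, u ≠ m → lt u m := by
  let gt : s → s → Prop := fun u v => lt v u
  have : IsTrans s gt := ⟨fun _ _ _ hab hbc => lt_trans_of_wellFounded hwf htot hbc hab⟩
  have : Std.Irrefl gt := ⟨fun u => hwf.irrefl.irrefl u.1⟩
  obtain ⟨⟨m, hm⟩, -, hmax⟩ :=
    (Finite.wellFounded_of_trans_of_irrefl gt).has_min Set.univ ⟨⟨_, hs.choose_spec⟩, trivial⟩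
  refine ⟨m, hm, fun u hu hum => ?_⟩
  rcases htot u m with hlt | rfl | hgt
  · exact hlt
  · exact absurd rfl hum
  · exact absurd hgt (hmax ⟨u, hu⟩ trivial)

end WellFoundedTotal

section Factor

variable {X : Type*} {lt : FreeMonoid X → FreeMonoid X → Prop}

theorem IsFactor.toList_subset {v u : FreeMonoid X} (h : IsFactor v u) :
    FreeMonoid.toList v ⊆ FreeMonoid.toList u := by
  obtain ⟨a, b, rfl⟩ := h
  intro x hx
  simp only [FreeMonoid.toList_mul, List.mem_append]
  exact Or.inl (Or.inr hx)

theorem IsFactor.not_lt (hwf : WellFounded lt)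
    (hcompat : ∀ u v w : FreeMonoid X, lt u v → lt (w * u) (w * v) ∧ lt (u * w) (v * w))
    {v u : FreeMonoid X} (h : IsFactor v u) : ¬ lt u v := by
  obtain ⟨a, b, rfl⟩ := h
  induction v using hwf.induction with
  | _ v ih =>
    intro hlt
    exact ih (a * v * b) hlt ((hcompat _ _ b (hcompat _ _ a hlt).1).2)

end Factor

section LeadingWord

variable {k X : Type*} [Field k] {lt : FreeMonoid X → FreeMonoid X → Prop}

theorem IsLeadingWord.unique (hwf : WellFounded lt) {f : FreeAlg k X} {w₁ w₂ : FreeMonoid X}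
    (h₁ : IsLeadingWord lt f w₁) (h₂ : IsLeadingWord lt f w₂) : w₁ = w₂ := by
  by_contra hne
  exact hwf.asymmetric _ _ (h₂.2 w₁ h₁.1 hne) (h₁.2 w₂ h₂.1 (Ne.symm hne))

theorem exists_isLeadingWord (hwf : WellFounded lt) (htot : ∀ u v, lt u v ∨ u = v ∨ lt v u)
    {f : FreeAlg k X} (hf : f ≠ 0) : ∃ w, IsLeadingWord lt f w :=
  Finset.exists_forall_lt_of_wellFounded hwf htot
    (Finsupp.support_nonempty_iff.mpr (mt MonoidAlgebra.coeff_eq_zero.mp hf))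

theorem IsReducedSet.coeff_eq_one (hwf : WellFounded lt) {G : Set (FreeAlg k X)}
    (hG : IsReducedSet lt G) {f : FreeAlg k X} (hf : f ∈ G) {w : FreeMonoid X}
    (hfw : IsLeadingWord lt f w) : f.coeff w = 1 := by
  obtain ⟨w₀, hfw₀, hcoeff⟩ := (hG.2 f hf).1
  rwa [hfw₀.unique hwf hfw] at hcoeff

/-- For `g = f` the factor `v` would be the leading word of `f`, which is larger than `u`. -/
theorem IsReducedSet.not_isFactor (hwf : WellFounded lt)
    (hcompat : ∀ u v w : FreeMonoid X, lt u v → lt (w * u) (w * v) ∧ lt (u * w) (v * w))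
    {G : Set (FreeAlg k X)} (hG : IsReducedSet lt G) {f g : FreeAlg k X} (hf : f ∈ G)
    (hg : g ∈ G) {w u v : FreeMonoid X} (hfw : IsLeadingWord lt f w) (hu : u ∈ f.coeff.support)
    (huw : u ≠ w) (hgv : IsLeadingWord lt g v) : ¬ IsFactor v u := by
  by_cases hgf : g = f
  · subst hgf
    obtain rfl := hgv.unique hwf hfw
    exact fun hvu => hvu.not_lt hwf hcompat (hfw.2 u hu huw)
  · exact (hG.2 f hf).2 u hu g hg hgf v hgv

end LeadingWord

theorem eq_of_isLeadingWord_of_isReducedSet {k X : Type*} [Field k]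
    {lt : FreeMonoid X → FreeMonoid X → Prop} (hwf : WellFounded lt)
    (htot : ∀ u v, lt u v ∨ u = v ∨ lt v u)
    (hcompat : ∀ u v w : FreeMonoid X, lt u v → lt (w * u) (w * v) ∧ lt (u * w) (v * w))
    {I : TwoSidedIdeal (FreeAlg k X)} {X' : Set X} {GI GJ : Set (FreeAlg k X)}
    (hGI : IsGroebnerBasis lt (I : Set (FreeAlg k X)) GI) (hGIred : IsReducedSet lt GI)
    (hGJred : IsReducedSet lt GJ)
    (hGJ : ∀ h ∈ GJ, h ∈ I ∧ ∀ w ∈ h.coeff.support, ∀ x ∈ FreeMonoid.toList w, x ∈ X')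
    (hlw : ∀ w, (∃ f ∈ GI, IsLeadingWord lt f w) → (∀ x ∈ FreeMonoid.toList w, x ∈ X') →
      ∃ h ∈ GJ, IsLeadingWord lt h w)
    {g h : FreeAlg k X} {w : FreeMonoid X} (hg : g ∈ GI) (hh : h ∈ GJ)
    (hgw : IsLeadingWord lt g w) (hhw : IsLeadingWord lt h w) : g = h := by
  classical
  by_contra hne
  have hp : g - h ≠ 0 := sub_ne_zero.mpr hne
  obtain ⟨w', hw'⟩ := exists_isLeadingWord hwf htot hp
  obtain ⟨g', hg', -, v, hg'v, hvw'⟩ := hGI.2 w' ⟨g - h, I.sub_mem (hGI.1 hg) (hGJ h hh).1, hp, hw'⟩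
  have hw'w : w' ≠ w := by
    rintro rfl
    refine Finsupp.mem_support_iff.mp hw'.1 ?_
    rw [MonoidAlgebra.coeff_sub, Finsupp.sub_apply, hGIred.coeff_eq_one hwf hg hgw,
      hGJred.coeff_eq_one hwf hh hhw, sub_self]
  have hw'gh : w' ∈ g.coeff.support ∪ h.coeff.support :=
    Finsupp.support_sub (by rw [← MonoidAlgebra.coeff_sub]; exact hw'.1)
  rcases Finset.mem_union.mp hw'gh with hw'g | hw'h
  · exact hGIred.not_isFactor hwf hcompat hg hg' hgw hw'g hw'w hg'v hvw'
  · obtain ⟨h', hh', hh'v⟩ := hlw v ⟨g', hg', hg'v⟩ fun x hx =>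
      (hGJ h hh).2 w' hw'h x (hvw'.toList_subset hx)
    exact hGJred.not_isFactor hwf hcompat hh hh' hhw hw'h hw'w hh'v hvw'

theorem reduced_groebner_basis_inter_general {k X : Type*} [Field k]
    (lt : FreeMonoid X → FreeMonoid X → Prop)
    (hwf : WellFounded lt) (htot : ∀ u v, lt u v ∨ u = v ∨ lt v u)
    (hcompat : ∀ u v w : FreeMonoid X, lt u v → lt (w * u) (w * v) ∧ lt (u * w) (v * w))
    (I : TwoSidedIdeal (FreeAlg k X))
    (X' : Set X)
    -- `J = I ∩ k⟨X'⟩`, where `k⟨X'⟩` consists of the polynomials all of whose words have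
    -- all their letters in `X'`
    (J : Set (FreeAlg k X))
    (hJ : J = {f : FreeAlg k X | f ∈ I ∧
      ∀ w ∈ f.coeff.support, ∀ x ∈ FreeMonoid.toList w, x ∈ X'})
    (GI GJ : Set (FreeAlg k X))
    (hGI : IsGroebnerBasis lt (I : Set (FreeAlg k X)) GI) (hGIred : IsReducedSet lt GI)
    (hGJ : IsGroebnerBasis lt J GJ) (hGJred : IsReducedSet lt GJ)
    (hlw : {w : FreeMonoid X | (∃ f ∈ GI, IsLeadingWord lt f w) ∧
        ∀ x ∈ FreeMonoid.toList w, x ∈ X'} =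
      {w : FreeMonoid X | ∃ f ∈ GJ, IsLeadingWord lt f w}) :
    GJ = GI ∩ {f : FreeAlg k X | ∀ w ∈ f.coeff.support, ∀ x ∈ FreeMonoid.toList w, x ∈ X'} := by
  have hGJ' : ∀ h ∈ GJ, h ∈ I ∧ ∀ w ∈ h.coeff.support, ∀ x ∈ FreeMonoid.toList w, x ∈ X' := by
    subst hJ
    exact hGJ.1
  have key : ∀ {g h w}, g ∈ GI → h ∈ GJ → IsLeadingWord lt g w → IsLeadingWord lt h w → g = h :=
    eq_of_isLeadingWord_of_isReducedSet hwf htot hcompat hGI hGIred hGJred hGJ'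
      fun w hw hwX' => hlw.subset ⟨hw, hwX'⟩
  ext f
  constructor
  · intro hf
    obtain ⟨w, hfw, -⟩ := (hGJred.2 f hf).1
    obtain ⟨⟨g, hg, hgw⟩, -⟩ := hlw.superset ⟨f, hf, hfw⟩
    exact ⟨key hg hf hgw hfw ▸ hg, (hGJ' f hf).2⟩
  · rintro ⟨hf, hfX'⟩
    obtain ⟨w, hfw, -⟩ := (hGIred.2 f hf).1
    obtain ⟨h, hh, hhw⟩ := hlw.subset ⟨⟨f, hf, hfw⟩, hfX' w hfw.1⟩
    exact key hf hh hfw hhw ▸ hh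

/-- If the leading words of the reduced Groebner basis `G_I` of `I` that are words on `X'`
are exactly the leading words of the reduced Groebner basis `G_J` of `J = I ∩ k⟨X'⟩`,
then `G_J = G_I ∩ k⟨X'⟩`. -/
theorem reduced_groebner_basis_inter {k X : Type*} [Field k]
    (lt : FreeMonoid X → FreeMonoid X → Prop)
    (hwf : WellFounded lt) (htot : ∀ u v, lt u v ∨ u = v ∨ lt v u)
    (hcompat : ∀ u v w : FreeMonoid X, lt u v → lt (w * u) (w * v) ∧ lt (u * w) (v * w))
    (I : TwoSidedIdeal (FreeAlg k X)) (hI : (I : Set (FreeAlg k X)) ≠ Set.univ)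
    (X' : Set X)
    -- `J = I ∩ k⟨X'⟩`, where `k⟨X'⟩` consists of the polynomials all of whose words have
    -- all their letters in `X'`
    (J : Set (FreeAlg k X))
    (hJ : J = {f : FreeAlg k X | f ∈ I ∧
      ∀ w ∈ f.coeff.support, ∀ x ∈ FreeMonoid.toList w, x ∈ X'})
    (GI GJ : Set (FreeAlg k X))
    (hGI : IsGroebnerBasis lt (I : Set (FreeAlg k X)) GI) (hGIred : IsReducedSet lt GI)
    (hGJ : IsGroebnerBasis lt J GJ) (hGJred : IsReducedSet lt GJ)
    (hlw : {w : FreeMonoid X | (∃ f ∈ GI, IsLeadingWord lt f w) ∧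
        ∀ x ∈ FreeMonoid.toList w, x ∈ X'} =
      {w : FreeMonoid X | ∃ f ∈ GJ, IsLeadingWord lt f w}) :
    GJ = GI ∩ {f : FreeAlg k X | ∀ w ∈ f.coeff.support, ∀ x ∈ FreeMonoid.toList w, x ∈ X'} :=
  reduced_groebner_basis_inter_general lt hwf htot hcompat I X' J hJ GI GJ hGI hGIred hGJ hGJred hlw
end

section
/- Let H = R[x; σ, δ] be an Ore extension of an algebra R (so {1, x, x², …} is a basis of H as a left R-module and x·a = σ(a)·x + δ(a) for a ∈ R, with σ an algebra endomorphism of R and δ a σ-derivation). If {1, x, x², …} is also a basis of H as a right R-module and R·x ⊆ x·R + R, then σ is an algebra automorphism of R. -/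
/-- Let `H = R[x; σ, δ]` be an Ore extension of `R`: the powers of `x` form a basis of `H`
as a left `R`-module and `x·a = σ(a)·x + δ(a)`. If the powers of `x` also form a basis of
`H` as a right `R`-module and `R·x ⊆ x·R + R`, then `σ` is an algebra automorphism. -/
theorem ore_extension_sigma_bijective {k H : Type*} [Field k] [Ring H] [Algebra k H]
    (R : Subalgebra k H) (x : H) (σ : ↥R →ₐ[k] ↥R) (δ : ↥R →ₗ[k] ↥R)
    (hδ : ∀ a b : ↥R, δ (a * b) = σ a * δ b + δ a * b)
    (hrel : ∀ a : ↥R, x * (a : H) = (σ a : H) * x + (δ a : H))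
    (hleft : ∀ h : H, ∃! c : ℕ →₀ ↥R, h = c.sum fun n a => (a : H) * x ^ n)
    (hright : ∀ h : H, ∃! c : ℕ →₀ ↥R, h = c.sum fun n a => x ^ n * (a : H))
    (hRx : ∀ a : ↥R, ∃ b c : ↥R, (a : H) * x = x * (b : H) + (c : H)) :
    Function.Bijective σ := by
  constructor
  · rw [injective_iff_map_eq_zero]
    intro a ha
    have h1 : x * (a : H) = (Finsupp.single 1 a).sum fun n b => x ^ n * (b : H) := by
      rw [Finsupp.sum_single_index (by simp), pow_one]
    have h2 : x * (a : H) = (Finsupp.single 0 (δ a)).sum fun n b => x ^ n * (b : H) := by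
      rw [Finsupp.sum_single_index (by simp), pow_zero, one_mul, hrel, ha]
      simp
    obtain ⟨cc, -, hu⟩ := hright (x * (a : H))
    have heq := (hu _ h1).trans (hu _ h2).symm
    have := DFunLike.congr_fun heq 1
    simpa using this
  · intro a
    obtain ⟨b, c, hbc⟩ := hRx a
    refine ⟨b, ?_⟩
    have h1 : (a : H) * x = (Finsupp.single 1 a).sum fun n b => (b : H) * x ^ n := by
      rw [Finsupp.sum_single_index (by simp), pow_one]
    have h2 : (a : H) * x = (Finsupp.single 1 (σ b) + Finsupp.single 0 (δ b + c)).sum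
        fun n b => (b : H) * x ^ n := by
      rw [Finsupp.sum_add_index' (by simp) (by intro n u v; push_cast; rw [add_mul]),
        Finsupp.sum_single_index (by simp), Finsupp.sum_single_index (by simp),
        pow_one, pow_zero, mul_one, hbc, hrel]
      push_cast
      abel
    obtain ⟨cc, -, hu⟩ := hleft ((a : H) * x)
    have heq := (hu _ h1).trans (hu _ h2).symm
    have := DFunLike.congr_fun heq 1
    simpa using this.symm
end
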